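/- Let g ≥ 2 and let α : ℤ^{2g} → ℂˣ be a group homomorphism whose image is not contained in the unit circle. Then there exists a group homomorphism p : ℤ^{2g} → ℂ (into the additive group of ℂ) with exp(p(v)) = α(v) for all v ∈ ℤ^{2g}, and whose volume vol(p) := Σ_{i=1}^g ( Re(p(eᵢ))·Im(p(e_{g+i})) − Im(p(eᵢ))·Re(p(e_{g+i})) ) is strictly positive, where e₁,…,e_{2g} is the standard basis of ℤ^{2g}. -/

import Mathlib

/-! Put `L j = log α(eⱼ)`. Any choice of logarithms `c j ∈ L j + 2πiℤ` gives the additive lift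
`v ↦ ∑ vⱼ cⱼ` of `α`, whose volume is the symplectic pairing `ω(Re c, Im c)`. As `α` is not
unitary, `Re L ≠ 0`, so by nondegeneracy of `ω` some basis vector has `ω(Re L, eₘ) ≠ 0`. Adding
`2πiN` to `c m` keeps `Re c` and shifts the volume by `2πN·ω(Re L, eₘ)`, which is positive for a
suitable integer `N`. -/

open Complex Finset
open scoped Real

section LogLift

variable {ι : Type*} [Fintype ι] [DecidableEq ι]

lemma map_eq_prod_zpow_single {G : Type*} [CommGroup G] {α : (ι → ℤ) → G}
    (hα : ∀ v w, α (v + w) = α v * α w) (v : ι → ℤ) :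
    α v = ∏ j, α (Pi.single j 1) ^ v j := by
  let φ : (ι → ℤ) →+ Additive G := AddMonoidHom.mk' (fun v => Additive.ofMul (α v)) hα
  have h := congrArg Additive.toMul (LinearMap.pi_apply_eq_sum_univ φ.toIntLinearMap v)
  have hs : ∀ j : ι, (fun k => if j = k then (1 : ℤ) else 0) = Pi.single j 1 := fun j => by
    ext k; simp [Pi.single_apply, eq_comm]
  simp only [hs, toMul_sum, toMul_zsmul, AddMonoidHom.coe_toIntLinearMap] at h
  exact h

variable {α : (ι → ℤ) → ℂˣ}

lemma exp_linearCombination_eq (hα : ∀ v w, α (v + w) = α v * α w) {c : ι → ℂ}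
    (hc : ∀ j, exp (c j) = α (Pi.single j 1)) (v : ι → ℤ) :
    exp (Fintype.linearCombination ℤ c v) = α v := by
  rw [Fintype.linearCombination_apply, exp_sum, map_eq_prod_zpow_single hα v]
  push_cast
  exact prod_congr rfl fun j _ => by rw [zsmul_eq_mul, exp_int_mul, hc]

lemma exists_norm_single_ne_one (hα : ∀ v w, α (v + w) = α v * α w)
    (h : ¬ ∀ v, ‖(α v : ℂ)‖ = 1) : ∃ j, ‖(α (Pi.single j 1) : ℂ)‖ ≠ 1 := by
  contrapose! h
  intro v
  rw [map_eq_prod_zpow_single hα v]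
  push_cast
  simp [norm_prod, norm_zpow, h]

end LogLift

lemma exists_int_pos_add_mul (S : ℝ) {a : ℝ} (ha : a ≠ 0) : ∃ N : ℤ, 0 < S + N * a := by
  rcases ha.lt_or_gt with ha | ha
  · obtain ⟨N, hN⟩ := exists_int_lt (S / -a)
    exact ⟨N, by nlinarith [(lt_div_iff₀ (neg_pos.2 ha)).1 hN]⟩
  · obtain ⟨N, hN⟩ := exists_int_gt (-S / a)
    exact ⟨N, by nlinarith [(div_lt_iff₀ ha).1 hN]⟩

def symplecticForm (g : ℕ) (x y : Fin (2 * g) → ℝ) : ℝ :=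
  ∑ i : Fin g, (x ⟨i, by omega⟩ * y ⟨g + i, by omega⟩ - x ⟨g + i, by omega⟩ * y ⟨i, by omega⟩)

namespace symplecticForm

variable {g : ℕ}

lemma add_smul_right (x y z : Fin (2 * g) → ℝ) (t : ℝ) :
    symplecticForm g x (y + t • z) = symplecticForm g x y + t * symplecticForm g x z := by
  simp only [symplecticForm, mul_sum, ← sum_add_distrib, Pi.add_apply, Pi.smul_apply, smul_eq_mul]
  exact sum_congr rfl fun i _ => by ring

lemma single_fst (x : Fin (2 * g) → ℝ) (i : Fin g) :
    symplecticForm g x (Pi.single ⟨i, by omega⟩ 1) = -x ⟨g + i, by omega⟩ := by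
  simp only [symplecticForm, Pi.single_apply, Fin.mk.injEq, Fin.val_inj, mul_ite, mul_one,
    mul_zero, sum_sub_distrib, sum_ite_eq', mem_univ, if_true]
  rw [sum_eq_zero fun k _ => if_neg (by omega), zero_sub]

lemma single_snd (x : Fin (2 * g) → ℝ) (i : Fin g) :
    symplecticForm g x (Pi.single ⟨g + i, by omega⟩ 1) = x ⟨i, by omega⟩ := by
  simp only [symplecticForm, Pi.single_apply, Fin.mk.injEq, add_right_inj, Fin.val_inj, mul_ite,
    mul_one, mul_zero, sum_sub_distrib, sum_ite_eq', mem_univ, if_true]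
  rw [sum_eq_zero fun k _ => if_neg (by omega), sub_zero]

lemma exists_single_ne_zero {x : Fin (2 * g) → ℝ} (hx : x ≠ 0) :
    ∃ m, symplecticForm g x (Pi.single m 1) ≠ 0 := by
  obtain ⟨j, hj⟩ : ∃ j, x j ≠ 0 := Function.ne_iff.1 hx
  by_cases h : j.val < g
  · exact ⟨_, by rwa [single_snd x ⟨j, h⟩]⟩
  · refine ⟨⟨j - g, by omega⟩, ?_⟩
    rw [single_fst x ⟨j - g, by omega⟩, neg_ne_zero]
    convert hj using 2
    ext
    simp only
    omega

lemma re_im (c : Fin (2 * g) → ℂ) :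
    symplecticForm g (fun j => (c j).re) (fun j => (c j).im) =
      ∑ i : Fin g, ((c ⟨i, by omega⟩).re * (c ⟨g + i, by omega⟩).im -
        (c ⟨i, by omega⟩).im * (c ⟨g + i, by omega⟩).re) :=
  sum_congr rfl fun _ _ => by ring

end symplecticForm

/-- let `g ≥ 2` and `α : ℤ^(2g) → ℂˣ` a homomorphism whose image
is not contained in the unit circle. Then `α` lifts through `exp` to an
additive homomorphism `p : ℤ^(2g) → ℂ` of positive volume
`vol(p) = ∑_{i=1}^g ( Re(p eᵢ)·Im(p e_{g+i}) - Im(p eᵢ)·Re(p e_{g+i}) )`. -/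
theorem exists_positive_volume_log_lift (g : ℕ)
    (α : (Fin (2 * g) → ℤ) → ℂˣ)
    (hα : ∀ v w : Fin (2 * g) → ℤ, α (v + w) = α v * α w)
    (him : ¬ ∀ v : Fin (2 * g) → ℤ, ‖(α v : ℂ)‖ = 1) :
    ∃ p : (Fin (2 * g) → ℤ) → ℂ,
      (∀ v w : Fin (2 * g) → ℤ, p (v + w) = p v + p w) ∧
      (∀ v : Fin (2 * g) → ℤ, Complex.exp (p v) = (α v : ℂ)) ∧
      0 < ∑ i : Fin g,
        ((p (Pi.single ⟨i.val, by have := i.isLt; omega⟩ 1)).re *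
            (p (Pi.single ⟨g + i.val, by have := i.isLt; omega⟩ 1)).im -
          (p (Pi.single ⟨i.val, by have := i.isLt; omega⟩ 1)).im *
            (p (Pi.single ⟨g + i.val, by have := i.isLt; omega⟩ 1)).re) := by
  let L : Fin (2 * g) → ℂ := fun j => log (α (Pi.single j 1))
  obtain ⟨j₀, hj₀⟩ := exists_norm_single_ne_one hα him
  have hLre : (fun j => (L j).re) ≠ 0 := Function.ne_iff.2 ⟨j₀, by
    simpa [L, log_re] using Real.log_ne_zero_of_pos_of_ne_one (by simp) hj₀⟩
  obtain ⟨m, hm⟩ := symplecticForm.exists_single_ne_zero hLre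
  obtain ⟨N, hN⟩ :=
    exists_int_pos_add_mul (symplecticForm g (fun j => (L j).re) (fun j => (L j).im))
      (a := 2 * π * symplecticForm g (fun j => (L j).re) (Pi.single m 1))
      (mul_ne_zero (by positivity) hm)
  let c := L + Pi.single m (N * (2 * π * I))
  have hc_exp : ∀ j, exp (c j) = α (Pi.single j 1) := fun j => by
    by_cases hjm : j = m <;> simp [c, L, exp_add, hjm, exp_log]
  have hc_re : (fun j => (c j).re) = fun j => (L j).re := by
    ext j; by_cases hjm : j = m <;> simp [c, hjm]
  have hc_im : (fun j => (c j).im) = (fun j => (L j).im) + (N * (2 * π)) • Pi.single m 1 := by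
    ext j; by_cases hjm : j = m <;> simp [c, hjm]
  refine ⟨Fintype.linearCombination ℤ c, map_add _, exp_linearCombination_eq hα hc_exp, ?_⟩
  simp only [Fintype.linearCombination_apply_single, one_smul, ← symplecticForm.re_im]
  rw [hc_re, hc_im, symplecticForm.add_smul_right]
  linarith
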